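/- Let {N, γ, ℓ, ℓ², Y} be an abstract Killing horizon of order one, i.e. an abstract Killing horizon of order zero (U = 0, zero set of α has empty interior) which additionally satisfies 0 = ∇̊_a∇̊_b α + 2(∇̊_{(a}α)(s_{b)} − r_{b)}) + 2α∇̊_{(a}s_{b)} + n(α)Y_{ab} − α(£_n Y)_{ab}, where r := Y(n,·). Then there is no point p ∈ N at which both α(p) = 0 and dα|_p = 0. -/

import Mathlib

noncomputable section

/-- Lie derivative of a covariant 2-tensor field in a flat chart. -/
def lieD2 {E : Type*} [NormedAddCommGroup E] [NormedSpace ℝ E]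
    (X : E → E) (T : E → E → E → ℝ) : E → E → E → ℝ :=
  fun p v w => fderiv ℝ (fun q => T q v w) p (X p)
    + T p (fderiv ℝ X p v) w + T p v (fderiv ℝ X p w)

/-- Exterior derivative of a one-form in a flat chart. -/
def extD1 {E : Type*} [NormedAddCommGroup E] [NormedSpace ℝ E]
    (ω : E → E → ℝ) : E → E → E → ℝ :=
  fun p v w => fderiv ℝ (fun q => ω q w) p v - fderiv ℝ (fun q => ω q v) p w

/-- Covariant derivative of a one-form with respect to a connection with Christoffel
map `Γ` (flat chart): `(∇̊_v ω)(w) = ∂_v(ω(w)) − ω(Γ(v,w))`. -/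
def covD1 {E : Type*} [NormedAddCommGroup E] [NormedSpace ℝ E]
    (Γ : E → E → E → E) (ω : E → E → ℝ) : E → E → E → ℝ :=
  fun p v w => fderiv ℝ (fun q => ω q w) p v - ω p (Γ p v w)

/-- Covariant Hessian of a function: `∇̊_v ∇̊_w f = ∂_v ∂_w f − df(Γ(v,w))`. -/
def covHess {E : Type*} [NormedAddCommGroup E] [NormedSpace ℝ E]
    (Γ : E → E → E → E) (f : E → ℝ) : E → E → E → ℝ :=
  fun p v w => fderiv ℝ (fun q => fderiv ℝ f q w) p v - fderiv ℝ f p (Γ p v w)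


section auxx
open Finset Module
set_option linter.unusedSectionVars false
variable {F : Type*} [NormedAddCommGroup F] [NormedSpace ℝ F] [FiniteDimensional ℝ F]
variable {ι : Type*} [Fintype ι]

lemma aux_expand (b : Basis ι ℝ F) {T : F → ℝ} (hT : IsLinearMap ℝ T) (u : F) :
    T u = ∑ i, b.repr u i * T (b i) := by
  conv_lhs => rw [← b.sum_repr u]
  rw [show T (∑ i, b.repr u i • b i) = (IsLinearMap.mk' T hT) (∑ i, b.repr u i • b i) from rfl,
    map_sum]
  simp [smul_eq_mul]

lemma aux_coord (b : Basis ι ℝ F) (i : ι) {X : F → F} (hX : ContDiff ℝ (⊤ : ℕ∞) X) :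
    ContDiff ℝ (⊤ : ℕ∞) (fun q => (b.repr (X q) i : ℝ)) := by
  have h : ContDiff ℝ (⊤ : ℕ∞) (fun q => ((ContinuousLinearMap.proj i).comp
      (b.equivFunL : F →L[ℝ] ι → ℝ)) (X q)) :=
    (ContinuousLinearMap.contDiff _).comp hX
  simpa [Basis.equivFunL_apply, Basis.equivFun_apply] using h

lemma aux_fda {f : F → ℝ} (hf : ContDiff ℝ (⊤ : ℕ∞) f) (u : F) :
    ContDiff ℝ (⊤ : ℕ∞) fun q => fderiv ℝ f q u :=
  (hf.fderiv_right (by simp)).clm_apply contDiff_const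

lemma aux_fderiv_expand (b : Basis ι ℝ F) {T : F → F → ℝ}
    (hT : ∀ w, ContDiff ℝ (⊤ : ℕ∞) (fun q => T q w)) (hTlin : ∀ q, IsLinearMap ℝ (T q))
    (u w q : F) :
    fderiv ℝ (fun q' => T q' u) q w
      = ∑ i, b.repr u i * fderiv ℝ (fun q' => T q' (b i)) q w := by
  have h1 : (fun q' => T q' u) = fun q' => ∑ i, b.repr u i * T q' (b i) :=
    funext fun q' => aux_expand b (hTlin q') u
  rw [h1, fderiv_fun_sum (fun i _ =>
    (((hT (b i)).differentiable (by simp)) q).const_mul _)]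
  rw [ContinuousLinearMap.sum_apply]
  refine Finset.sum_congr rfl fun i _ => ?_
  rw [fderiv_const_mul (((hT (b i)).differentiable (by simp)) q)]
  simp

lemma aux_smooth_comp (b : Basis ι ℝ F) {T : F → F → ℝ}
    (hT : ∀ w, ContDiff ℝ (⊤ : ℕ∞) (fun q => T q w)) (hTlin : ∀ q, IsLinearMap ℝ (T q))
    {X : F → F} (hX : ContDiff ℝ (⊤ : ℕ∞) X) : ContDiff ℝ (⊤ : ℕ∞) (fun q => T q (X q)) := by
  have h : (fun q => T q (X q)) = fun q => ∑ i, b.repr (X q) i * T q (b i) :=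
    funext fun q => aux_expand b (hTlin q) (X q)
  rw [h]
  exact ContDiff.sum fun i _ => (aux_coord b i hX).mul (hT (b i))


variable {ℓ : F → F → ℝ} {n : F → F} {s : F → F → ℝ}

lemma aux_s_lin (hℓsmooth : ∀ v, ContDiff ℝ (⊤ : ℕ∞) (fun p => ℓ p v))
    (hℓlin : ∀ p, IsLinearMap ℝ (ℓ p))
    (hsdef : ∀ p v, s p v = (1/2) * extD1 ℓ p (n p) v) :
    ∀ q, IsLinearMap ℝ (s q) := by
  have hform : ∀ q w, s q w = (1/2) * (fderiv ℝ (fun q' => ℓ q' w) q (n q)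
      - fderiv ℝ (fun q' => ℓ q' (n q)) q w) := fun q w => by rw [hsdef]; rfl
  intro q
  constructor
  · intro w1 w2
    have e1 : (fun q' => ℓ q' (w1 + w2)) = fun q' => ℓ q' w1 + ℓ q' w2 :=
      funext fun q' => (hℓlin q').map_add w1 w2
    rw [hform, hform, hform, e1,
      fderiv_fun_add (((hℓsmooth w1).differentiable (by simp)) q)
        (((hℓsmooth w2).differentiable (by simp)) q)]
    simp only [ContinuousLinearMap.add_apply, map_add]
    ring
  · intro c w
    have e1 : (fun q' => ℓ q' (c • w)) = fun q' => c * ℓ q' w :=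
      funext fun q' => by rw [(hℓlin q').map_smul]; simp
    rw [hform, hform, e1, fderiv_const_mul (((hℓsmooth w).differentiable (by simp)) q)]
    simp only [ContinuousLinearMap.smul_apply, map_smul, smul_eq_mul]
    ring

lemma aux_s_smooth (b : Basis ι ℝ F)
    (hℓsmooth : ∀ v, ContDiff ℝ (⊤ : ℕ∞) (fun p => ℓ p v))
    (hℓlin : ∀ p, IsLinearMap ℝ (ℓ p)) (hn : ContDiff ℝ (⊤ : ℕ∞) n)
    (hsdef : ∀ p v, s p v = (1/2) * extD1 ℓ p (n p) v) :
    ∀ w, ContDiff ℝ (⊤ : ℕ∞) fun q => s q w := by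
  intro w
  have hform : (fun q => s q w) = fun q => (1/2) * (fderiv ℝ (fun q' => ℓ q' w) q (n q)
      - ∑ i, b.repr (n q) i * fderiv ℝ (fun q' => ℓ q' (b i)) q w) := by
    funext q
    rw [hsdef, ← aux_fderiv_expand b hℓsmooth hℓlin (n q) w q]
    rfl
  rw [hform]
  refine contDiff_const.mul (ContDiff.sub ?_ ?_)
  · exact ((hℓsmooth w).fderiv_right (by simp)).clm_apply hn
  · exact ContDiff.sum fun i _ => (aux_coord b i hn).mul (aux_fda (hℓsmooth (b i)) w)

variable {Y : F → F → F → ℝ} {Γ : F → F → F → F} {r : F → F → ℝ}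

lemma aux_r_smooth (b : Basis ι ℝ F)
    (hYsmooth : ∀ v w, ContDiff ℝ (⊤ : ℕ∞) (fun p => Y p v w))
    (hYlin1 : ∀ (p w : F), IsLinearMap ℝ (fun v => Y p v w))
    (hn : ContDiff ℝ (⊤ : ℕ∞) n)
    (hrdef : ∀ p v, r p v = Y p (n p) v) :
    ∀ w, ContDiff ℝ (⊤ : ℕ∞) fun q => r q w := by
  intro w
  have : (fun q => r q w) = fun q => Y q (n q) w := funext fun q => hrdef q w
  rw [this]
  exact aux_smooth_comp b (T := fun q u => Y q u w) (fun u => hYsmooth u w)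
    (fun q => hYlin1 q w) hn

lemma aux_covs_smooth (b : Basis ι ℝ F)
    (hssmooth : ∀ w, ContDiff ℝ (⊤ : ℕ∞) fun q => s q w)
    (hslin : ∀ q, IsLinearMap ℝ (s q))
    (hΓsmooth : ∀ v w, ContDiff ℝ (⊤ : ℕ∞) (fun p => Γ p v w)) :
    ∀ v w, ContDiff ℝ (⊤ : ℕ∞) fun q => covD1 Γ s q v w := by
  intro v w
  have : (fun q => covD1 Γ s q v w)
      = fun q => fderiv ℝ (fun q' => s q' w) q v - s q (Γ q v w) := rfl
  rw [this]
  exact (aux_fda (hssmooth w) v).sub (aux_smooth_comp b hssmooth hslin (hΓsmooth v w))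

lemma aux_lie_smooth (b : Basis ι ℝ F)
    (hYsmooth : ∀ v w, ContDiff ℝ (⊤ : ℕ∞) (fun p => Y p v w))
    (hYlin1 : ∀ (p w : F), IsLinearMap ℝ (fun v => Y p v w))
    (hYlin2 : ∀ (p v : F), IsLinearMap ℝ (fun w => Y p v w))
    (hn : ContDiff ℝ (⊤ : ℕ∞) n) :
    ∀ v w, ContDiff ℝ (⊤ : ℕ∞) fun q => lieD2 n Y q v w := by
  intro v w
  have : (fun q => lieD2 n Y q v w) = fun q => fderiv ℝ (fun q' => Y q' v w) q (n q)
      + Y q (fderiv ℝ n q v) w + Y q v (fderiv ℝ n q w) := rfl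
  rw [this]
  refine ContDiff.add (ContDiff.add ?_ ?_) ?_
  · exact ((hYsmooth v w).fderiv_right (by simp)).clm_apply hn
  · exact aux_smooth_comp b (T := fun q u => Y q u w) (fun u => hYsmooth u w)
      (fun q => hYlin1 q w) ((hn.fderiv_right (by simp)).clm_apply contDiff_const)
  · exact aux_smooth_comp b (T := fun q u => Y q v u) (fun u => hYsmooth v u)
      (fun q => hYlin2 q v) ((hn.fderiv_right (by simp)).clm_apply contDiff_const)

end auxx

open Finset Module

set_option maxHeartbeats 2000000 in
/-- On an abstract Killing horizon of order one — an abstract Killing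
horizon of order zero (U = 0, the zero set of α has empty interior) additionally
satisfying `0 = ∇̊_a∇̊_b α + 2(∇̊_{(a}α)(s_{b)} − r_{b)}) + 2α∇̊_{(a}s_{b)}
+ n(α)Y_{ab} − α(£_n Y)_{ab}` with `r := Y(n,·)` — there is no point at which both
`α` and `dα` vanish. -/
theorem stmt14 {F : Type*} [NormedAddCommGroup F] [NormedSpace ℝ F]
    [FiniteDimensional ℝ F]
    (γ : F → F → F → ℝ) (ℓ : F → F → ℝ) (l2 : F → ℝ) (Y : F → F → F → ℝ)
    (n : F → F) (α : F → ℝ) (Γ : F → F → F → F)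
    -- smoothness
    (hγsmooth : ∀ v w : F, ContDiff ℝ (⊤ : ℕ∞) (fun p => γ p v w))
    (hℓsmooth : ∀ v : F, ContDiff ℝ (⊤ : ℕ∞) (fun p => ℓ p v))
    (hl2smooth : ContDiff ℝ (⊤ : ℕ∞) l2)
    (hYsmooth : ∀ v w : F, ContDiff ℝ (⊤ : ℕ∞) (fun p => Y p v w))
    (hΓsmooth : ∀ v w : F, ContDiff ℝ (⊤ : ℕ∞) (fun p => Γ p v w))
    (hn : ContDiff ℝ (⊤ : ℕ∞) n) (hα : ContDiff ℝ (⊤ : ℕ∞) α)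
    -- (multi)linearity and symmetry
    (hγlin1 : ∀ (p w : F), IsLinearMap ℝ (fun v => γ p v w))
    (hγlin2 : ∀ (p v : F), IsLinearMap ℝ (fun w => γ p v w))
    (hγsym : ∀ p v w : F, γ p v w = γ p w v)
    (hℓlin : ∀ p : F, IsLinearMap ℝ (fun v => ℓ p v))
    (hYlin1 : ∀ (p w : F), IsLinearMap ℝ (fun v => Y p v w))
    (hYlin2 : ∀ (p v : F), IsLinearMap ℝ (fun w => Y p v w))
    (hYsym : ∀ p v w : F, Y p v w = Y p w v)
    (hΓlin1 : ∀ (p w : F), IsLinearMap ℝ (fun v => Γ p v w))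
    (hΓlin2 : ∀ (p v : F), IsLinearMap ℝ (fun w => Γ p v w))
    -- ∇̊ is torsion-free
    (hΓsym : ∀ p v w : F, Γ p v w = Γ p w v)
    -- the data conditions: γ(n,·) = 0, γ ≥ 0, ℓ(n) = 1, nondegeneracy of 𝒜
    (hrad : ∀ (p : F) (v : F), γ p (n p) v = 0)
    (hpos : ∀ p v : F, 0 ≤ γ p v v)
    (hℓn : ∀ p : F, ℓ p (n p) = 1)
    (hnd : ∀ (p : F) (v : F) (a : ℝ),
      (∀ (w : F) (b : ℝ),
        γ p v w + a * ℓ p w + b * ℓ p v + a * b * l2 p = 0) → v = 0 ∧ a = 0)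
    -- the one-forms s := (1/2)dℓ(n,·) and r := Y(n,·)
    (s r : F → F → ℝ)
    (hsdef : ∀ p v : F, s p v = (1/2) * extD1 ℓ p (n p) v)
    (hrdef : ∀ p v : F, r p v = Y p (n p) v)
    -- abstract Killing horizon of order zero: U = 0 and the zero set of α has
    -- empty interior
    (hU : ∀ p v w : F, lieD2 n γ p v w = 0)
    (hS : interior {p : F | α p = 0} = ∅)
    -- the metric hypersurface connection equations with U = 0:
    -- ∇̊γ = 0 and ∇̊ℓ = F
    (hcovγ : ∀ p v w x : F,
      fderiv ℝ (fun q => γ q w x) p v - γ p (Γ p v w) x - γ p w (Γ p v x) = 0)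
    (hcovℓ : ∀ p v w : F, covD1 Γ ℓ p v w = (1/2) * extD1 ℓ p v w)
    -- the defining condition of an abstract Killing horizon of order one
    (hAKH1 : ∀ p v w : F,
      0 = covHess Γ α p v w
        + (fderiv ℝ α p v * (s p w - r p w) + fderiv ℝ α p w * (s p v - r p v))
        + α p * (covD1 Γ s p v w + covD1 Γ s p w v)
        + fderiv ℝ α p (n p) * Y p v w
        - α p * lieD2 n Y p v w) :
    ¬ ∃ p : F, α p = 0 ∧ ∀ v : F, fderiv ℝ α p v = 0 := by
  rintro ⟨p, hp0, hdp⟩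
  classical
  let b : Basis (Fin (finrank ℝ F)) ℝ F := Module.finBasis ℝ F
  have hα' : Differentiable ℝ α := hα.differentiable (by simp)
  have hdalin : ∀ q : F, IsLinearMap ℝ (fun u => fderiv ℝ α q u) :=
    fun q => ⟨fun a c => (fderiv ℝ α q).map_add a c, fun c a => (fderiv ℝ α q).map_smul c a⟩
  have hg : ∀ u : F, ContDiff ℝ (⊤ : ℕ∞) (fun q => fderiv ℝ α q u) := fun u => aux_fda hα u
  have hslin := aux_s_lin hℓsmooth hℓlin hsdef
  have hssm := aux_s_smooth b hℓsmooth hℓlin hn hsdef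
  have hrsm := aux_r_smooth b hYsmooth hYlin1 hn hrdef
  have hcssm := aux_covs_smooth b hssm hslin hΓsmooth
  have hliesm := aux_lie_smooth b hYsmooth hYlin1 hYlin2 hn
  have exp1 : ∀ (q u : F), fderiv ℝ α q u = ∑ i, b.repr u i * fderiv ℝ α q (b i) :=
    fun q u => aux_expand b (hdalin q) u
  have key : ∀ (q v w : F), fderiv ℝ (fun q' => fderiv ℝ α q' w) q v
      = fderiv ℝ α q (Γ q v w)
        - fderiv ℝ α q v * (s q w - r q w) - fderiv ℝ α q w * (s q v - r q v)
        - α q * (covD1 Γ s q v w + covD1 Γ s q w v)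
        - fderiv ℝ α q (n q) * Y q v w
        + α q * lieD2 n Y q v w := by
    intro q v w
    have h := hAKH1 q v w
    simp only [covHess] at h
    linarith
  suffices hall : ∀ q, α q = 0 by
    have h1 : {q : F | α q = 0} = Set.univ := Set.eq_univ_of_forall hall
    rw [h1, interior_univ] at hS
    exact Set.notMem_empty p (hS ▸ Set.mem_univ p)
  intro q0
  set v : F := q0 - p with hv
  set c : ℝ → F := fun t => p + t • v with hc
  have hcd : ∀ t : ℝ, HasDerivAt c v t := fun t => by
    simpa [hc] using ((hasDerivAt_id t).smul_const v).const_add p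
  set H : ℝ → ℝ × (Fin (finrank ℝ F) → ℝ) :=
    fun t => (α (c t), fun j => fderiv ℝ α (c t) (b j)) with hH
  set H' : ℝ → ℝ × (Fin (finrank ℝ F) → ℝ) :=
    fun t => (fderiv ℝ α (c t) v,
      fun j => fderiv ℝ (fun q => fderiv ℝ α q (b j)) (c t) v) with hH'
  have hHd : ∀ t, HasDerivAt H (H' t) t := by
    intro t
    refine HasDerivAt.prodMk ?_ (hasDerivAt_pi.2 fun j => ?_)
    · exact (hα' (c t)).hasFDerivAt.comp_hasDerivAt t (hcd t)
    · exact (((hg (b j)).differentiable (by simp)) (c t)).hasFDerivAt.comp_hasDerivAt t (hcd t)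
  -- the weight function
  set W : F → ℝ := fun q => ∑ j, ((∑ i, |b.repr (Γ q v (b j)) i|)
      + (∑ i, |b.repr v i|) * |s q (b j) - r q (b j)|
      + |s q v - r q v|
      + |covD1 Γ s q v (b j) + covD1 Γ s q (b j) v|
      + (∑ i, |b.repr (n q) i|) * |Y q v (b j)|
      + |lieD2 n Y q v (b j)|) with hW
  have hWcont : Continuous W := by
    refine continuous_finset_sum _ fun j _ => ?_
    have c1 : Continuous fun q => ∑ i, |b.repr (Γ q v (b j)) i| :=
      continuous_finset_sum _ fun i _ => ((aux_coord b i (hΓsmooth v (b j))).continuous).abs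
    have c2 : Continuous fun q => |s q (b j) - r q (b j)| :=
      (((hssm (b j)).continuous).sub ((hrsm (b j)).continuous)).abs
    have c3 : Continuous fun q => |s q v - r q v| :=
      (((hssm v).continuous).sub ((hrsm v).continuous)).abs
    have c4 : Continuous fun q => |covD1 Γ s q v (b j) + covD1 Γ s q (b j) v| :=
      (((hcssm v (b j)).continuous).add ((hcssm (b j) v).continuous)).abs
    have c5 : Continuous fun q => ∑ i, |b.repr (n q) i| :=
      continuous_finset_sum _ fun i _ => ((aux_coord b i hn).continuous).abs
    have c6 : Continuous fun q => |Y q v (b j)| := (hYsmooth v (b j)).continuous.abs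
    have c7 : Continuous fun q => |lieD2 n Y q v (b j)| := (hliesm v (b j)).continuous.abs
    exact ((((c1.add (continuous_const.mul c2)).add c3).add c4).add (c5.mul c6)).add c7
  have hccont : Continuous c := continuous_const.add (continuous_id.smul continuous_const)
  obtain ⟨K, hK⟩ := ((isCompact_Icc (a := (0:ℝ)) (b := 1)).image
    hccont).exists_bound_of_continuousOn hWcont.continuousOn
  set Kv : ℝ := ∑ i, |b.repr v i| with hKv
  have hKv0 : 0 ≤ Kv := Finset.sum_nonneg fun i _ => abs_nonneg _
  set KK : ℝ := max K Kv with hKK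
  have hKK0 : 0 ≤ KK := le_trans hKv0 (le_max_right _ _)
  have hHn : ∀ t : ℝ, (0:ℝ) ≤ ‖H t‖ := fun t => norm_nonneg _
  have hfst : ∀ t : ℝ, |α (c t)| ≤ ‖H t‖ := fun t => by
    have := norm_fst_le (H t)
    simpa [Real.norm_eq_abs] using this
  have hgle : ∀ (t : ℝ) (i : Fin (finrank ℝ F)), |fderiv ℝ α (c t) (b i)| ≤ ‖H t‖ := by
    intro t i
    have h1 : |fderiv ℝ α (c t) (b i)| = ‖(H t).2 i‖ := by simp [Real.norm_eq_abs, hH]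
    rw [h1]
    exact le_trans (norm_le_pi_norm _ i) (norm_snd_le _)
  have habs : ∀ (t : ℝ) (u : F), |fderiv ℝ α (c t) u| ≤ (∑ i, |b.repr u i|) * ‖H t‖ := by
    intro t u
    rw [exp1 (c t) u]
    calc |∑ i, b.repr u i * fderiv ℝ α (c t) (b i)|
        ≤ ∑ i, |b.repr u i * fderiv ℝ α (c t) (b i)| := Finset.abs_sum_le_sum_abs _ _
      _ ≤ ∑ i, |b.repr u i| * ‖H t‖ := Finset.sum_le_sum fun i _ => by
          rw [abs_mul]; exact mul_le_mul_of_nonneg_left (hgle t i) (abs_nonneg _)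
      _ = (∑ i, |b.repr u i|) * ‖H t‖ := (Finset.sum_mul _ _ _).symm
  have tri : ∀ A B C D E G : ℝ, |A - B - C - D - E + G|
      ≤ |A| + |B| + |C| + |D| + |E| + |G| := by
    intro A B C D E G
    calc |A - B - C - D - E + G| ≤ |A - B - C - D - E| + |G| := abs_add_le _ _
      _ ≤ (|A - B - C - D| + |E|) + |G| := by have := abs_sub (A - B - C - D) E; linarith
      _ ≤ ((|A - B - C| + |D|) + |E|) + |G| := by have := abs_sub (A - B - C) D; linarith
      _ ≤ (((|A - B| + |C|) + |D|) + |E|) + |G| := by have := abs_sub (A - B) C; linarith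
      _ ≤ ((((|A| + |B|) + |C|) + |D|) + |E|) + |G| := by have := abs_sub A B; linarith
      _ = |A| + |B| + |C| + |D| + |E| + |G| := by ring
  have hb2 : ∀ (t : ℝ) (j : Fin (finrank ℝ F)),
      |fderiv ℝ (fun q => fderiv ℝ α q (b j)) (c t) v| ≤ W (c t) * ‖H t‖ := by
    intro t j
    rw [key (c t) v (b j)]
    have t1 : |fderiv ℝ α (c t) (Γ (c t) v (b j))|
        ≤ (∑ i, |b.repr (Γ (c t) v (b j)) i|) * ‖H t‖ := habs t _
    have t2 : |fderiv ℝ α (c t) v * (s (c t) (b j) - r (c t) (b j))|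
        ≤ ((∑ i, |b.repr v i|) * |s (c t) (b j) - r (c t) (b j)|) * ‖H t‖ := by
      rw [abs_mul]
      nlinarith [habs t v, abs_nonneg (s (c t) (b j) - r (c t) (b j)), hHn t,
        abs_nonneg (fderiv ℝ α (c t) v)]
    have t3 : |fderiv ℝ α (c t) (b j) * (s (c t) v - r (c t) v)|
        ≤ |s (c t) v - r (c t) v| * ‖H t‖ := by
      rw [abs_mul]
      nlinarith [hgle t j, abs_nonneg (s (c t) v - r (c t) v),
        abs_nonneg (fderiv ℝ α (c t) (b j))]
    have t4 : |α (c t) * (covD1 Γ s (c t) v (b j) + covD1 Γ s (c t) (b j) v)|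
        ≤ |covD1 Γ s (c t) v (b j) + covD1 Γ s (c t) (b j) v| * ‖H t‖ := by
      rw [abs_mul]
      nlinarith [hfst t, abs_nonneg (covD1 Γ s (c t) v (b j) + covD1 Γ s (c t) (b j) v),
        abs_nonneg (α (c t))]
    have t5 : |fderiv ℝ α (c t) (n (c t)) * Y (c t) v (b j)|
        ≤ ((∑ i, |b.repr (n (c t)) i|) * |Y (c t) v (b j)|) * ‖H t‖ := by
      rw [abs_mul]
      nlinarith [habs t (n (c t)), abs_nonneg (Y (c t) v (b j)), hHn t,
        abs_nonneg (fderiv ℝ α (c t) (n (c t)))]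
    have t6 : |α (c t) * lieD2 n Y (c t) v (b j)|
        ≤ |lieD2 n Y (c t) v (b j)| * ‖H t‖ := by
      rw [abs_mul]
      nlinarith [hfst t, abs_nonneg (lieD2 n Y (c t) v (b j)), abs_nonneg (α (c t))]
    have W_ge : (∑ i, |b.repr (Γ (c t) v (b j)) i|)
        + (∑ i, |b.repr v i|) * |s (c t) (b j) - r (c t) (b j)|
        + |s (c t) v - r (c t) v|
        + |covD1 Γ s (c t) v (b j) + covD1 Γ s (c t) (b j) v|
        + (∑ i, |b.repr (n (c t)) i|) * |Y (c t) v (b j)|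
        + |lieD2 n Y (c t) v (b j)| ≤ W (c t) := by
      rw [hW]
      exact Finset.single_le_sum (f := fun j' => (∑ i, |b.repr (Γ (c t) v (b j')) i|)
        + (∑ i, |b.repr v i|) * |s (c t) (b j') - r (c t) (b j')|
        + |s (c t) v - r (c t) v|
        + |covD1 Γ s (c t) v (b j') + covD1 Γ s (c t) (b j') v|
        + (∑ i, |b.repr (n (c t)) i|) * |Y (c t) v (b j')|
        + |lieD2 n Y (c t) v (b j')|) (fun j' _ => by positivity) (Finset.mem_univ j)
    calc |fderiv ℝ α (c t) (Γ (c t) v (b j))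
          - fderiv ℝ α (c t) v * (s (c t) (b j) - r (c t) (b j))
          - fderiv ℝ α (c t) (b j) * (s (c t) v - r (c t) v)
          - α (c t) * (covD1 Γ s (c t) v (b j) + covD1 Γ s (c t) (b j) v)
          - fderiv ℝ α (c t) (n (c t)) * Y (c t) v (b j)
          + α (c t) * lieD2 n Y (c t) v (b j)|
        ≤ |fderiv ℝ α (c t) (Γ (c t) v (b j))|
          + |fderiv ℝ α (c t) v * (s (c t) (b j) - r (c t) (b j))|
          + |fderiv ℝ α (c t) (b j) * (s (c t) v - r (c t) v)|
          + |α (c t) * (covD1 Γ s (c t) v (b j) + covD1 Γ s (c t) (b j) v)|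
          + |fderiv ℝ α (c t) (n (c t)) * Y (c t) v (b j)|
          + |α (c t) * lieD2 n Y (c t) v (b j)| := tri _ _ _ _ _ _
      _ ≤ ((∑ i, |b.repr (Γ (c t) v (b j)) i|)
          + (∑ i, |b.repr v i|) * |s (c t) (b j) - r (c t) (b j)|
          + |s (c t) v - r (c t) v|
          + |covD1 Γ s (c t) v (b j) + covD1 Γ s (c t) (b j) v|
          + (∑ i, |b.repr (n (c t)) i|) * |Y (c t) v (b j)|
          + |lieD2 n Y (c t) v (b j)|) * ‖H t‖ := by
          rw [add_mul, add_mul, add_mul, add_mul, add_mul]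
          linarith
      _ ≤ W (c t) * ‖H t‖ := mul_le_mul_of_nonneg_right W_ge (hHn t)
  have hbound : ∀ t ∈ Set.Ico (0:ℝ) 1, ‖H' t‖ ≤ KK * ‖H t‖ + 0 := by
    intro t ht
    rw [add_zero]
    have hWK : W (c t) ≤ KK := by
      have hmem : c t ∈ c '' Set.Icc 0 1 := ⟨t, ⟨ht.1, le_of_lt ht.2⟩, rfl⟩
      have h2 := hK _ hmem
      rw [Real.norm_eq_abs] at h2
      exact le_trans (le_trans (le_abs_self _) h2) (le_max_left _ _)
    have hKvK : Kv ≤ KK := le_max_right _ _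
    have hnorm : ‖H' t‖ = max ‖(H' t).1‖ ‖(H' t).2‖ := rfl
    rw [hnorm]
    apply max_le
    · have h1 : ‖(H' t).1‖ = |fderiv ℝ α (c t) v| := by simp [Real.norm_eq_abs, hH']
      rw [h1]
      exact le_trans (habs t v) (mul_le_mul_of_nonneg_right hKvK (hHn t))
    · rw [pi_norm_le_iff_of_nonneg (mul_nonneg hKK0 (hHn t))]
      intro j
      have h1 : ‖(H' t).2 j‖ = |fderiv ℝ (fun q => fderiv ℝ α q (b j)) (c t) v| := by
        simp [Real.norm_eq_abs, hH']
      rw [h1]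
      exact le_trans (hb2 t j) (mul_le_mul_of_nonneg_right hWK (hHn t))
  have h0 : H 0 = 0 := by
    have hc0 : c 0 = p := by simp [hc]
    have : H 0 = (α p, fun j => fderiv ℝ α p (b j)) := by rw [hH]; simp [hc0]
    rw [this]
    refine Prod.ext ?_ ?_
    · simpa using hp0
    · funext j; simpa using hdp (b j)
  have hgron := norm_le_gronwallBound_of_norm_deriv_right_le (f := H) (f' := H')
    (δ := 0) (K := KK) (ε := 0) (a := 0) (b := 1)
    (fun t _ => (hHd t).continuousAt.continuousWithinAt)
    (fun t _ => (hHd t).hasDerivWithinAt)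
    (by rw [h0, norm_zero]) hbound 1 (by norm_num)
  rw [gronwallBound_ε0_δ0] at hgron
  have hH1 : H 1 = 0 := norm_le_zero_iff.mp hgron
  have hfst1 : α (c 1) = 0 := congrArg Prod.fst hH1
  have hc1 : c 1 = q0 := by
    rw [hc]; simp [hv]
  rwa [hc1] at hfst1
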